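/- (Small gradient norm of the output of a non-restarted epoch of continuous RISP.) Let F : ℝ^d → ℝ be twice differentiable with ρ-Lipschitz Hessian (ρ > 0), let ε > 0, and set α = (ε·ρ)^{1/4}, T_max = (ε·ρ)^{−1/4}, B = √(ε/ρ). Let x : [0,∞) → ℝ^d be twice differentiable and solve the heavy-ball ODE ẍ_t + α·ẋ_t + ∇F(x_t) = 0 for all t ≥ 0, with ẋ_0 = 0, and assume that for every T ∈ [0, T_max], T·∫₀ᵀ ‖ẋ_t‖² dt ≤ B². Let K₀ ∈ [T_max/2, T_max] be a minimizer of t ↦ ‖ẋ_t‖ over [T_max/2, T_max], and let x̂ = (1/K₀)·∫₀^{K₀} x_t dt. Then ‖∇F(x̂)‖ ≤ 5·ε. -/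

import Mathlib

/-!
Integrating the heavy-ball equation over `[0, K₀]` gives
`∫ ∇F(x_t) dt = -α (x_{K₀} - x_0) - ẋ_{K₀}`, and both terms on the right are controlled by the
kinetic energy: `‖x_{K₀} - x_0‖² ≤ K₀ ∫ ‖ẋ‖² ≤ B²` by Jensen, and `‖ẋ_{K₀}‖ ≤ √2 B / T_max`
because `K₀` minimises the speed on `[T_max/2, T_max]`. So the average gradient along the
trajectory is at most `2α (αB + √2 αB) = 2(1 + √2) ε`. The gradient at the average point differs
from the average gradient by the second-order Taylor remainder only, since the linear term averages
out; with a `ρ`-Lipschitz Hessian this is at most `ρ/2` times the spread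
`K₀⁻¹ ∫ ‖x_t - x̂‖² ≤ K₀ ∫ ‖ẋ‖² / 3 ≤ B² / 3`, i.e. at most `ε / 6`. Finally
`1/6 + 2(1 + √2) ≤ 5`.
-/

open MeasureTheory Set

theorem integral_abs_sub_of_mem_Icc {K t : ℝ} (ht : t ∈ Icc 0 K) :
    ∫ s in (0 : ℝ)..K, |s - t| = (t ^ 2 + (K - t) ^ 2) / 2 := by
  have hint : ∀ u w : ℝ, IntervalIntegrable (fun s => |s - t|) volume u w := fun u w =>
    (continuous_abs.comp (continuous_id.sub continuous_const)).intervalIntegrable u w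
  rw [← intervalIntegral.integral_add_adjacent_intervals (hint 0 t) (hint t K),
    intervalIntegral.integral_congr (g := fun s => t - s) fun s hs => ?_,
    intervalIntegral.integral_congr (a := t) (g := fun s => s - t) fun s hs => ?_]
  · simp only [intervalIntegral.integral_sub intervalIntegrable_const
        intervalIntegral.intervalIntegrable_id,
      intervalIntegral.integral_sub intervalIntegral.intervalIntegrable_id
        intervalIntegrable_const,
      intervalIntegral.integral_const, integral_id, smul_eq_mul]
    ring
  · rw [uIcc_of_le ht.2] at hs
    exact abs_of_nonneg (sub_nonneg.2 hs.1)
  · rw [uIcc_of_le ht.1] at hs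
    exact abs_of_nonpos (sub_nonpos.2 hs.2) |>.trans (neg_sub _ _)

theorem risp_parameter_identities {ε ρ : ℝ} (hε : 0 < ε) (hρ : 0 < ρ) :
    0 < (ε * ρ) ^ ((1 : ℝ) / 4) ∧ (ε * ρ) ^ (-(1 : ℝ) / 4) = ((ε * ρ) ^ ((1 : ℝ) / 4))⁻¹ ∧
      ((ε * ρ) ^ ((1 : ℝ) / 4)) ^ 2 * √(ε / ρ) = ε ∧ ρ * √(ε / ρ) ^ 2 = ε := by
  have hερ : 0 < ε * ρ := mul_pos hε hρ
  refine ⟨Real.rpow_pos_of_pos hερ _, by rw [← Real.rpow_neg hερ.le, neg_div], ?_, ?_⟩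
  · rw [← Real.rpow_natCast, ← Real.rpow_mul hερ.le,
      show (1 : ℝ) / 4 * (2 : ℕ) = 1 / 2 by norm_num, ← Real.sqrt_eq_rpow,
      ← Real.sqrt_mul hερ.le, show ε * ρ * (ε / ρ) = ε ^ 2 by field_simp, Real.sqrt_sq hε.le]
  · rw [Real.sq_sqrt (div_pos hε hρ).le]
    field_simp

section

variable {E : Type*} [NormedAddCommGroup E]

theorem mul_norm_sq_le_integral_norm_sq_of_forall_le {v : ℝ → E} {a b c d s : ℝ}
    (hca : c ≤ a) (hab : a ≤ b) (hbd : b ≤ d) (hv : ContinuousOn v (Icc c d))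
    (hmin : ∀ t ∈ Icc a b, ‖v s‖ ≤ ‖v t‖) :
    (b - a) * ‖v s‖ ^ 2 ≤ ∫ t in c..d, ‖v t‖ ^ 2 := by
  have hcd : uIcc c d = Icc c d := uIcc_of_le (hca.trans (hab.trans hbd))
  have hint : IntervalIntegrable (fun t => ‖v t‖ ^ 2) volume c d :=
    (hcd ▸ hv.norm.pow 2).intervalIntegrable
  calc (b - a) * ‖v s‖ ^ 2 = ∫ _ in a..b, ‖v s‖ ^ 2 := by simp
    _ ≤ ∫ t in a..b, ‖v t‖ ^ 2 :=
        intervalIntegral.integral_mono_on hab intervalIntegrable_const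
          (hint.mono_set (by rw [uIcc_of_le hab, hcd]; exact Icc_subset_Icc hca hbd))
          fun t ht => pow_le_pow_left₀ (norm_nonneg _) (hmin t ht) 2
    _ ≤ ∫ t in c..d, ‖v t‖ ^ 2 := intervalIntegral.integral_mono_interval hca hab hbd
        (Filter.Eventually.of_forall fun _ => sq_nonneg _) hint

theorem norm_le_sqrt_two_mul_div_of_forall_le {v : ℝ → E} {T B s : ℝ} (hT : 0 < T)
    (hB : 0 ≤ B) (hv : ContinuousOn v (Icc 0 T)) (hmin : ∀ t ∈ Icc (T / 2) T, ‖v s‖ ≤ ‖v t‖)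
    (henergy : T * ∫ t in (0 : ℝ)..T, ‖v t‖ ^ 2 ≤ B ^ 2) :
    ‖v s‖ ≤ √2 * B / T := by
  have h := mul_norm_sq_le_integral_norm_sq_of_forall_le (by linarith) (by linarith) le_rfl hv hmin
  rw [le_div_iff₀ hT, ← Real.sqrt_sq hB, ← Real.sqrt_mul zero_le_two]
  refine Real.le_sqrt_of_sq_le ?_
  nlinarith [mul_le_mul_of_nonneg_left h hT.le]

variable [NormedSpace ℝ E]

theorem norm_intervalAverage_sq_le [CompleteSpace E] {f : ℝ → E} {a b : ℝ} (hab : a < b)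
    (hf : IntervalIntegrable f volume a b)
    (hf2 : IntervalIntegrable (fun t => ‖f t‖ ^ 2) volume a b) :
    ‖(b - a)⁻¹ • ∫ t in a..b, f t‖ ^ 2 ≤ (b - a)⁻¹ * ∫ t in a..b, ‖f t‖ ^ 2 := by
  rw [← interval_average_eq, ← smul_eq_mul, ← interval_average_eq, uIoc_of_le hab.le]
  exact (convexOn_univ_norm.pow (fun _ _ => norm_nonneg _) 2).map_set_average_le
    (continuous_norm.pow 2).continuousOn isClosed_univ (by simp [hab]) (by simp)
    (by simp) hf.1 hf2.1

theorem norm_sub_sq_le_mul_integral_norm_deriv_sq [CompleteSpace E] {x v : ℝ → E} {s t : ℝ}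
    (hst : s ≤ t) (hx : ∀ u ∈ Icc s t, HasDerivAt x (v u) u) (hv : ContinuousOn v (Icc s t)) :
    ‖x t - x s‖ ^ 2 ≤ (t - s) * ∫ u in s..t, ‖v u‖ ^ 2 := by
  rcases hst.eq_or_lt with rfl | hst
  · simp
  have hIcc : uIcc s t = Icc s t := uIcc_of_le hst.le
  have hvi : IntervalIntegrable v volume s t := (hIcc ▸ hv).intervalIntegrable
  have hftc : x t - x s = (t - s) • ((t - s)⁻¹ • ∫ u in s..t, v u) := by
    rw [smul_inv_smul₀ (sub_pos.2 hst).ne', intervalIntegral.integral_eq_sub_of_hasDerivAt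
      (fun u hu => hx u (hIcc ▸ hu)) hvi]
  calc ‖x t - x s‖ ^ 2 = (t - s) ^ 2 * ‖(t - s)⁻¹ • ∫ u in s..t, v u‖ ^ 2 := by
        rw [hftc, norm_smul, Real.norm_of_nonneg (sub_pos.2 hst).le, mul_pow]
    _ ≤ (t - s) ^ 2 * ((t - s)⁻¹ * ∫ u in s..t, ‖v u‖ ^ 2) := by
        gcongr
        exact norm_intervalAverage_sq_le hst hvi (hIcc ▸ hv.norm.pow 2).intervalIntegrable
    _ = (t - s) * ∫ u in s..t, ‖v u‖ ^ 2 := by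
        field_simp

theorem norm_sub_sq_le_abs_mul_integral_norm_deriv_sq [CompleteSpace E] {x v : ℝ → E}
    {a b : ℝ} (hx : ∀ u ∈ Icc a b, HasDerivAt x (v u) u) (hv : ContinuousOn v (Icc a b))
    {s t : ℝ} (hs : s ∈ Icc a b) (ht : t ∈ Icc a b) :
    ‖x s - x t‖ ^ 2 ≤ |s - t| * ∫ u in a..b, ‖v u‖ ^ 2 := by
  wlog hts : t ≤ s generalizing s t
  · rw [norm_sub_rev, abs_sub_comm]
    exact this ht hs (le_of_not_ge hts)
  have hsub : Icc t s ⊆ Icc a b := Icc_subset_Icc ht.1 hs.2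
  calc ‖x s - x t‖ ^ 2 ≤ (s - t) * ∫ u in t..s, ‖v u‖ ^ 2 :=
        norm_sub_sq_le_mul_integral_norm_deriv_sq hts (fun u hu => hx u (hsub hu)) (hv.mono hsub)
    _ ≤ |s - t| * ∫ u in a..b, ‖v u‖ ^ 2 := by
        rw [abs_of_nonneg (sub_nonneg.2 hts)]
        gcongr
        exact intervalIntegral.integral_mono_interval ht.1 hts hs.2
          (Filter.Eventually.of_forall fun u => sq_nonneg _)
          (uIcc_of_le (ht.1.trans ht.2) ▸ hv.norm.pow 2).intervalIntegrable

theorem integral_norm_sub_average_sq_le [CompleteSpace E] {x : ℝ → E} {K I : ℝ} (hK : 0 < K)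
    (hx : ContinuousOn x (Icc 0 K))
    (hI : ∀ s ∈ Icc 0 K, ∀ t ∈ Icc 0 K, ‖x s - x t‖ ^ 2 ≤ |s - t| * I) :
    K⁻¹ * ∫ t in (0 : ℝ)..K, ‖x t - K⁻¹ • ∫ s in (0 : ℝ)..K, x s‖ ^ 2 ≤ K * I / 3 := by
  set xhat := K⁻¹ • ∫ s in (0 : ℝ)..K, x s
  have hIcc : uIcc 0 K = Icc 0 K := uIcc_of_le hK.le
  have hpoint : ∀ t ∈ Icc 0 K, ‖x t - xhat‖ ^ 2 ≤ I / K * ((t ^ 2 + (K - t) ^ 2) / 2) := by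
    intro t ht
    have hdiff : ContinuousOn (fun s => x s - x t) (uIcc 0 K) := hIcc ▸ hx.sub continuousOn_const
    have havg : xhat - x t = (K - 0)⁻¹ • ∫ s in (0 : ℝ)..K, (x s - x t) := by
      rw [intervalIntegral.integral_sub (hIcc ▸ hx).intervalIntegrable intervalIntegrable_const,
        intervalIntegral.integral_const, sub_zero, smul_sub, inv_smul_smul₀ hK.ne']
    calc ‖x t - xhat‖ ^ 2 ≤ (K - 0)⁻¹ * ∫ s in (0 : ℝ)..K, ‖x s - x t‖ ^ 2 := by
          rw [norm_sub_rev, havg]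
          exact norm_intervalAverage_sq_le hK hdiff.intervalIntegrable
            (hdiff.norm.pow 2).intervalIntegrable
      _ ≤ K⁻¹ * ∫ s in (0 : ℝ)..K, |s - t| * I := by
          rw [sub_zero]
          gcongr
          exact intervalIntegral.integral_mono_on hK.le (hdiff.norm.pow 2).intervalIntegrable
            ((by fun_prop : Continuous fun s : ℝ => |s - t| * I).intervalIntegrable _ _)
            fun s hs => hI s hs t ht
      _ = I / K * ((t ^ 2 + (K - t) ^ 2) / 2) := by
          rw [intervalIntegral.integral_mul_const, integral_abs_sub_of_mem_Icc ht]
          field_simp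
  have hpoly : ∀ t : ℝ,
      I / K * ((t ^ 2 + (K - t) ^ 2) / 2) = I / K * t ^ 2 - I * t + I * K / 2 := by
    intro t
    field_simp
    ring
  calc K⁻¹ * ∫ t in (0 : ℝ)..K, ‖x t - xhat‖ ^ 2
      ≤ K⁻¹ * ∫ t in (0 : ℝ)..K, (I / K * t ^ 2 - I * t + I * K / 2) := by
        simp only [← hpoly]
        gcongr
        exact intervalIntegral.integral_mono_on hK.le
          ((hIcc ▸ hx.sub continuousOn_const).norm.pow 2).intervalIntegrable
          (Continuous.intervalIntegrable (by fun_prop) _ _) hpoint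
    _ = K * I / 3 := by
        rw [intervalIntegral.integral_add, intervalIntegral.integral_sub,
          intervalIntegral.integral_const_mul, intervalIntegral.integral_const_mul, integral_pow,
          integral_id, intervalIntegral.integral_const, smul_eq_mul]
        · field_simp
          ring
        all_goals exact Continuous.intervalIntegrable (by fun_prop) _ _

variable {F : Type*} [NormedAddCommGroup F] [NormedSpace ℝ F]

theorem norm_sub_sub_fderiv_le_of_lipschitz_fderiv {f : E → F} {ρ : ℝ}
    (hf : Differentiable ℝ f)
    (hlip : ∀ a b : E, ‖fderiv ℝ f a - fderiv ℝ f b‖ ≤ ρ * ‖a - b‖) (z y : E) :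
    ‖f y - f z - fderiv ℝ f z (y - z)‖ ≤ ρ / 2 * ‖y - z‖ ^ 2 := by
  set L := fderiv ℝ f z
  set g : ℝ → F := fun t => f (z + t • (y - z)) - f z - t • L (y - z)
  have hg : ∀ t, HasDerivAt g ((fderiv ℝ f (z + t • (y - z)) - L) (y - z)) t := by
    intro t
    have hline : HasDerivAt (fun t : ℝ => z + t • (y - z)) (y - z) t := by
      simpa using ((hasDerivAt_id t).smul_const (y - z)).const_add z
    exact ((((hf _).hasFDerivAt.comp_hasDerivAt t hline).sub_const (f z)).sub
      ((hasDerivAt_id t).smul_const (L (y - z)))).congr_deriv (by rw [one_smul]; rfl)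
  have hB : ∀ t, HasDerivAt (fun t : ℝ => ρ / 2 * ‖y - z‖ ^ 2 * t ^ 2)
      (ρ * ‖y - z‖ ^ 2 * t) t := fun t =>
    ((hasDerivAt_pow 2 t).const_mul _).congr_deriv (by push_cast; ring)
  have hbound : ∀ t ∈ Ico (0 : ℝ) 1,
      ‖(fderiv ℝ f (z + t • (y - z)) - L) (y - z)‖ ≤ ρ * ‖y - z‖ ^ 2 * t := by
    intro t ht
    calc ‖(fderiv ℝ f (z + t • (y - z)) - L) (y - z)‖
        ≤ ‖fderiv ℝ f (z + t • (y - z)) - L‖ * ‖y - z‖ := ContinuousLinearMap.le_opNorm _ _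
      _ ≤ ρ * ‖z + t • (y - z) - z‖ * ‖y - z‖ := by gcongr; exact hlip _ _
      _ = ρ * ‖y - z‖ ^ 2 * t := by
        rw [add_sub_cancel_left, norm_smul, Real.norm_of_nonneg ht.1]
        ring
  simpa [g] using image_norm_le_of_norm_deriv_right_le_deriv_boundary
    (fun t _ => (hg t).continuousAt.continuousWithinAt) (fun t _ => (hg t).hasDerivWithinAt)
    (by simp [g]) hB hbound (right_mem_Icc.2 zero_le_one)

theorem norm_apply_average_sub_average_apply_le [CompleteSpace E] [CompleteSpace F]
    {f : E → F} {ρ : ℝ} (hf : Differentiable ℝ f)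
    (hlip : ∀ a b : E, ‖fderiv ℝ f a - fderiv ℝ f b‖ ≤ ρ * ‖a - b‖)
    {c : ℝ → E} {a b : ℝ} (hab : a < b) (hc : ContinuousOn c (Icc a b)) :
    ‖f ((b - a)⁻¹ • ∫ t in a..b, c t) - (b - a)⁻¹ • ∫ t in a..b, f (c t)‖
      ≤ ρ / 2 * ((b - a)⁻¹ * ∫ t in a..b, ‖c t - (b - a)⁻¹ • ∫ s in a..b, c s‖ ^ 2) := by
  set p := (b - a)⁻¹ • ∫ t in a..b, c t
  set L := fderiv ℝ f p
  have hba : 0 < b - a := sub_pos.2 hab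
  have hc' : ContinuousOn c (uIcc a b) := uIcc_of_le hab.le ▸ hc
  have hfc : ContinuousOn (fun t => f (c t)) (uIcc a b) := hf.continuous.comp_continuousOn hc'
  have hcp : IntervalIntegrable (fun t => c t - p) volume a b :=
    (hc'.sub continuousOn_const).intervalIntegrable
  have hlin : ∫ t in a..b, L (c t - p) = 0 := by
    rw [L.intervalIntegral_comp_comm hcp,
      intervalIntegral.integral_sub hc'.intervalIntegrable intervalIntegrable_const,
      intervalIntegral.integral_const, smul_inv_smul₀ hba.ne', sub_self, map_zero]
  have hrem : f p - (b - a)⁻¹ • ∫ t in a..b, f (c t)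
      = -((b - a)⁻¹ • ∫ t in a..b, (f (c t) - f p - L (c t - p))) := by
    have hfcp : IntervalIntegrable (fun t => f (c t) - f p) volume a b :=
      (hfc.sub continuousOn_const).intervalIntegrable
    have hLcp : IntervalIntegrable (fun t => L (c t - p)) volume a b :=
      (L.continuous.comp_continuousOn (hc'.sub continuousOn_const)).intervalIntegrable
    rw [intervalIntegral.integral_sub hfcp hLcp, hlin, sub_zero,
      intervalIntegral.integral_sub hfc.intervalIntegrable intervalIntegrable_const,
      intervalIntegral.integral_const, smul_sub, inv_smul_smul₀ hba.ne']
    abel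
  rw [hrem, norm_neg, norm_smul, Real.norm_of_nonneg (inv_nonneg.2 hba.le), ← mul_assoc,
    mul_comm (ρ / 2), mul_assoc, ← intervalIntegral.integral_const_mul]
  gcongr
  exact intervalIntegral.norm_integral_le_of_norm_le hab.le
    (Filter.Eventually.of_forall fun t _ =>
      norm_sub_sub_fderiv_le_of_lipschitz_fderiv hf hlip p (c t))
    ((hc'.sub continuousOn_const).norm.pow 2 |>.const_smul (ρ / 2)).intervalIntegrable

theorem integral_comp_eq_of_heavyBall [CompleteSpace E] {G : E → E} (hG : Continuous G)
    {α a b : ℝ} (hab : a ≤ b) {x v w : ℝ → E}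
    (hx : ∀ t ∈ Icc a b, HasDerivAt x (v t) t) (hv : ∀ t ∈ Icc a b, HasDerivAt v (w t) t)
    (hode : ∀ t ∈ Icc a b, w t + α • v t + G (x t) = 0) :
    ∫ t in a..b, G (x t) = -(α • (x b - x a) + (v b - v a)) := by
  have hIcc : uIcc a b = Icc a b := uIcc_of_le hab
  have hxc : ContinuousOn x (uIcc a b) :=
    fun t ht => (hx t (hIcc ▸ ht)).continuousAt.continuousWithinAt
  rw [intervalIntegral.integral_eq_sub_of_hasDerivAt (f := fun t => -(α • x t + v t))
    (f' := fun t => G (x t)) (fun t ht => ?_) (hG.comp_continuousOn hxc).intervalIntegrable]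
  · simp only [smul_sub]
    abel
  · rw [hIcc] at ht
    rw [← neg_eq_of_add_eq_zero_right (hode t ht), add_comm]
    exact (((hx t ht).const_smul α).add (hv t ht)).neg

theorem norm_apply_average_le_of_heavyBall [CompleteSpace E] {G : E → E} {ρ α K : ℝ}
    (hρ : 0 ≤ ρ) (hG : Differentiable ℝ G)
    (hlip : ∀ a b : E, ‖fderiv ℝ G a - fderiv ℝ G b‖ ≤ ρ * ‖a - b‖) (hK : 0 < K)
    {x v w : ℝ → E}
    (hx : ∀ t ∈ Icc 0 K, HasDerivAt x (v t) t) (hv : ∀ t ∈ Icc 0 K, HasDerivAt v (w t) t)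
    (hode : ∀ t ∈ Icc 0 K, w t + α • v t + G (x t) = 0) (hv0 : v 0 = 0) :
    ‖G (K⁻¹ • ∫ t in (0 : ℝ)..K, x t)‖
      ≤ ρ * K * (∫ t in (0 : ℝ)..K, ‖v t‖ ^ 2) / 6
        + K⁻¹ * (|α| * √(K * ∫ t in (0 : ℝ)..K, ‖v t‖ ^ 2) + ‖v K‖) := by
  set I := ∫ t in (0 : ℝ)..K, ‖v t‖ ^ 2
  have hxc : ContinuousOn x (Icc 0 K) := fun t ht => (hx t ht).continuousAt.continuousWithinAt
  have hvc : ContinuousOn v (Icc 0 K) := fun t ht => (hv t ht).continuousAt.continuousWithinAt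
  have hTaylor := norm_apply_average_sub_average_apply_le hG hlip hK hxc
  simp only [sub_zero] at hTaylor
  have hspread := integral_norm_sub_average_sq_le hK hxc fun s hs t ht =>
    norm_sub_sq_le_abs_mul_integral_norm_deriv_sq hx hvc hs ht
  have hdisp : ‖x K - x 0‖ ≤ √(K * I) := Real.le_sqrt_of_sq_le <| by
    simpa using norm_sub_sq_le_mul_integral_norm_deriv_sq hK.le hx hvc
  have hforce : ‖K⁻¹ • ∫ t in (0 : ℝ)..K, G (x t)‖ ≤ K⁻¹ * (|α| * √(K * I) + ‖v K‖) := by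
    rw [integral_comp_eq_of_heavyBall hG.continuous hK.le hx hv hode, hv0, sub_zero, norm_smul,
      norm_neg, Real.norm_of_nonneg (inv_nonneg.2 hK.le)]
    gcongr
    exact (norm_add_le _ _).trans (by rw [norm_smul, Real.norm_eq_abs]; gcongr)
  calc ‖G (K⁻¹ • ∫ t in (0 : ℝ)..K, x t)‖
      ≤ ‖G (K⁻¹ • ∫ t in (0 : ℝ)..K, x t) - K⁻¹ • ∫ t in (0 : ℝ)..K, G (x t)‖
        + ‖K⁻¹ • ∫ t in (0 : ℝ)..K, G (x t)‖ := norm_le_norm_sub_add _ _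
    _ ≤ ρ / 2 * (K * I / 3) + K⁻¹ * (|α| * √(K * I) + ‖v K‖) := by
        gcongr
        exact hTaylor.trans (by gcongr)
    _ = ρ * K * I / 6 + K⁻¹ * (|α| * √(K * I) + ‖v K‖) := by ring

end

theorem continuous_risp_no_restart_small_gradient_general
    {d : ℕ}
    (F : EuclideanSpace ℝ (Fin d) → ℝ) (ρ : ℝ) (hρ : 0 < ρ)
    (hFd2 : Differentiable ℝ (gradient F))
    (hlipHess : ∀ a b : EuclideanSpace ℝ (Fin d),
      ‖fderiv ℝ (gradient F) a - fderiv ℝ (gradient F) b‖ ≤ ρ * ‖a - b‖)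
    (ε : ℝ) (hε : 0 < ε)
    (α Tmax B : ℝ)
    (hα : α = (ε * ρ) ^ ((1 : ℝ) / 4))
    (hTmax : Tmax = (ε * ρ) ^ (-(1 : ℝ) / 4))
    (hB : B = Real.sqrt (ε / ρ))
    (x v a : ℝ → EuclideanSpace ℝ (Fin d))
    (hx : ∀ t : ℝ, 0 ≤ t → HasDerivAt x (v t) t)
    (hv : ∀ t : ℝ, 0 ≤ t → HasDerivAt v (a t) t)
    (hode : ∀ t : ℝ, 0 ≤ t → a t + α • v t + gradient F (x t) = 0)
    (hv0 : v 0 = 0)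
    (hnorestart : ∀ T : ℝ, 0 ≤ T → T ≤ Tmax →
      T * ∫ t in (0 : ℝ)..T, ‖v t‖ ^ 2 ≤ B ^ 2)
    (K₀ : ℝ) (hK₀lb : Tmax / 2 ≤ K₀) (hK₀ub : K₀ ≤ Tmax)
    (hK₀min : ∀ t : ℝ, Tmax / 2 ≤ t → t ≤ Tmax → ‖v K₀‖ ≤ ‖v t‖)
    (xhat : EuclideanSpace ℝ (Fin d))
    (hxhat : xhat = K₀⁻¹ • ∫ t in (0 : ℝ)..K₀, x t) :
    ‖gradient F xhat‖ ≤ 5 * ε := by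
  obtain ⟨hα0, hTα, hα2B, hρB⟩ : 0 < α ∧ Tmax = α⁻¹ ∧ α ^ 2 * B = ε ∧ ρ * B ^ 2 = ε := by
    subst hα hTmax hB
    exact risp_parameter_identities hε hρ
  have hT : 0 < Tmax := hTα ▸ inv_pos.2 hα0
  have hK : 0 < K₀ := by linarith
  have hB0 : 0 ≤ B := hB ▸ Real.sqrt_nonneg _
  have hvK : ‖v K₀‖ ≤ √2 * B / Tmax :=
    norm_le_sqrt_two_mul_div_of_forall_le hT hB0
      (fun t ht => (hv t ht.1).continuousAt.continuousWithinAt) (fun t ht => hK₀min t ht.1 ht.2)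
      (hnorestart Tmax hT.le le_rfl)
  have hKinv : K₀⁻¹ ≤ 2 * α := by
    rw [inv_le_iff_one_le_mul₀ hK]
    nlinarith [mul_inv_cancel₀ hα0.ne']
  have hIK := hnorestart K₀ hK.le hK₀ub
  rw [hxhat]
  refine (norm_apply_average_le_of_heavyBall hρ.le hFd2 hlipHess hK (fun t ht => hx t ht.1)
    (fun t ht => hv t ht.1) (fun t ht => hode t ht.1) hv0).trans ?_
  calc _ ≤ ρ * B ^ 2 / 6 + 2 * α * (α * B + √2 * B / Tmax) := by
        rw [abs_of_pos hα0, mul_assoc]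
        gcongr
        exact (Real.sqrt_le_sqrt hIK).trans_eq (Real.sqrt_sq hB0)
    _ = (1 / 6 + 2 * (1 + √2)) * ε := by
        rw [hTα, div_inv_eq_mul]
        linear_combination (1 / 6) * hρB + (2 + 2 * √2) * hα2B
    _ ≤ 5 * ε := by nlinarith [Real.sq_sqrt zero_le_two, Real.sqrt_nonneg 2]

/-- Small gradient norm of the output of a non-restarted epoch
of continuous RISP. -/
theorem continuous_risp_no_restart_small_gradient
    {d : ℕ} (hd : 1 ≤ d)
    (F : EuclideanSpace ℝ (Fin d) → ℝ) (ρ : ℝ) (hρ : 0 < ρ)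
    (hFd : Differentiable ℝ F) (hFd2 : Differentiable ℝ (gradient F))
    (hlipHess : ∀ a b : EuclideanSpace ℝ (Fin d),
      ‖fderiv ℝ (gradient F) a - fderiv ℝ (gradient F) b‖ ≤ ρ * ‖a - b‖)
    (ε : ℝ) (hε : 0 < ε)
    (α Tmax B : ℝ)
    (hα : α = (ε * ρ) ^ ((1 : ℝ) / 4))
    (hTmax : Tmax = (ε * ρ) ^ (-(1 : ℝ) / 4))
    (hB : B = Real.sqrt (ε / ρ))
    (x v a : ℝ → EuclideanSpace ℝ (Fin d))
    (hx : ∀ t : ℝ, 0 ≤ t → HasDerivAt x (v t) t)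
    (hv : ∀ t : ℝ, 0 ≤ t → HasDerivAt v (a t) t)
    (hode : ∀ t : ℝ, 0 ≤ t → a t + α • v t + gradient F (x t) = 0)
    (hv0 : v 0 = 0)
    (hnorestart : ∀ T : ℝ, 0 ≤ T → T ≤ Tmax →
      T * ∫ t in (0 : ℝ)..T, ‖v t‖ ^ 2 ≤ B ^ 2)
    (K₀ : ℝ) (hK₀lb : Tmax / 2 ≤ K₀) (hK₀ub : K₀ ≤ Tmax)
    (hK₀min : ∀ t : ℝ, Tmax / 2 ≤ t → t ≤ Tmax → ‖v K₀‖ ≤ ‖v t‖)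
    (xhat : EuclideanSpace ℝ (Fin d))
    (hxhat : xhat = K₀⁻¹ • ∫ t in (0 : ℝ)..K₀, x t) :
    ‖gradient F xhat‖ ≤ 5 * ε :=
  continuous_risp_no_restart_small_gradient_general F ρ hρ hFd2 hlipHess ε hε α Tmax B hα hTmax hB x
    v a hx hv hode hv0 hnorestart K₀ hK₀lb hK₀ub hK₀min xhat hxhat
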